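/- Let X be a complex Banach space whose dual X* is uniformly convex, and let Y be any complex Banach space. Then for every ε ∈ (0, 1) there exists η(ε) > 0 such that whenever f ∈ A_{w*u}(B_{X*}, Y) with ‖f‖∞ = 1 and x₀* ∈ S_{X*} satisfy ‖f(x₀*)‖_Y > 1 − η(ε), there exist g ∈ A_{w*u}(B_{X*}, Y) with ‖g‖∞ = 1 and x₁* ∈ S_{X*} such that ‖g(x₁*)‖_Y = 1, ‖g − f‖∞ < ε and ‖x₁* − x₀*‖ < ε. -/

import Mathlib

/-!
Perturb `f` by a peak function: choose `x ∈ B_X` with `Re x₀*(x) ≈ 1` and let `v` be the unit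
vector in the direction of `f x₀*`; then `G y = f y + a (1 + y x) v` is within `2a` of `f`.
Since `B_{X*}` is weak-* compact, `‖G‖` attains its maximum at some `z`, and `‖G z‖ ≥ ‖G x₀*‖`
forces `|1 + z x|` close to `2`, hence `Re z(x) ≈ 1`. So `x₀*` and `z` almost norm the same
`x`, and uniform convexity of `X*` makes them close. If `z` is interior, the maximum modulus
principle makes `‖G‖` constant, so `x₀*` itself is a maximizer on the sphere. Finally
`g = G / ‖G‖∞`.
-/

open NormedSpace Metric Filter Topology

noncomputable section

variable {X Y : Type*} [NormedAddCommGroup X] [NormedSpace ℂ X]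
  [NormedAddCommGroup Y] [NormedSpace ℂ Y]

/-- Membership in `A_{w*u}(B_{X*}, Y)`: `f` is weak-*-to-norm continuous on the closed unit
ball of the dual (equivalently, weak-* uniformly continuous, as the ball is weak-* compact)
and holomorphic on the open unit ball. -/
def MemAwsu (f : StrongDual ℂ X → Y) : Prop :=
  ContinuousOn (fun φ : WeakDual ℂ X => f (WeakDual.toStrongDual φ))
      {φ : WeakDual ℂ X | ‖WeakDual.toStrongDual φ‖ ≤ 1}
    ∧ DifferentiableOn ℂ f (ball (0 : StrongDual ℂ X) 1)

/-- The supremum norm `‖f‖_∞ = sup {‖f x*‖ : x* ∈ B_{X*}}`. -/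
def supNorm (f : StrongDual ℂ X → Y) : ℝ :=
  ⨆ x : closedBall (0 : StrongDual ℂ X) 1, ‖f (x : StrongDual ℂ X)‖

theorem ContinuousLinearMap.exists_norm_le_one_lt_re_apply {𝕜 E : Type*} [RCLike 𝕜]
    [NormedAddCommGroup E] [NormedSpace 𝕜 E] (φ : StrongDual 𝕜 E) {r : ℝ} (hr : r < ‖φ‖) :
    ∃ x : E, ‖x‖ ≤ 1 ∧ r < RCLike.re (φ x) := by
  obtain ⟨w, hw, hrw⟩ := φ.exists_lt_apply_of_lt_opNorm hr
  obtain ⟨c, hc, hcw⟩ := RCLike.exists_norm_eq_mul_self (φ w)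
  refine ⟨c • w, by rw [norm_smul, hc, one_mul]; exact hw.le, ?_⟩
  rwa [map_smul, smul_eq_mul, ← hcw, RCLike.ofReal_re]

theorem exists_norm_eq_one_eq_norm_smul {𝕜 E : Type*} [RCLike 𝕜] [NormedAddCommGroup E]
    [NormedSpace 𝕜 E] {y : E} (hy : y ≠ 0) : ∃ v : E, ‖v‖ = 1 ∧ y = (‖y‖ : 𝕜) • v :=
  ⟨(‖y‖⁻¹ : 𝕜) • y, norm_smul_inv_norm hy,
    (smul_inv_smul₀ (RCLike.ofReal_ne_zero.2 (norm_ne_zero_iff.2 hy)) y).symm⟩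

theorem exists_forall_norm_sub_lt_of_lt_re_apply {𝕜 E : Type*} [RCLike 𝕜] [NormedAddCommGroup E]
    [NormedSpace 𝕜 E] [UniformConvexSpace (StrongDual 𝕜 E)] {ε : ℝ} (hε : 0 < ε) :
    ∃ δ ∈ Set.Ioc (0 : ℝ) 1, ∀ x : E, ‖x‖ ≤ 1 → ∀ ⦃φ ψ : StrongDual 𝕜 E⦄, ‖φ‖ ≤ 1 → ‖ψ‖ ≤ 1 →
      1 - δ < RCLike.re (φ x) → 1 - δ < RCLike.re (ψ x) → ‖φ - ψ‖ < ε := by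
  obtain ⟨δ, hδ, hsum⟩ := exists_forall_closed_ball_dist_add_le_two_sub (StrongDual 𝕜 E) hε
  refine ⟨min (δ / 2) 1, ⟨by positivity, min_le_right _ _⟩, fun x hx φ ψ hφ hψ hφx hψx => ?_⟩
  by_contra! hεφψ
  have hre : RCLike.re (φ x) + RCLike.re (ψ x) ≤ ‖φ + ψ‖ :=
    calc RCLike.re (φ x) + RCLike.re (ψ x) = RCLike.re ((φ + ψ) x) := by simp
      _ ≤ ‖(φ + ψ) x‖ := RCLike.re_le_norm _
      _ ≤ ‖φ + ψ‖ := (φ + ψ).le_opNorm_of_le hx |>.trans_eq (mul_one _)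
  linarith [hsum hφ hψ hεφψ, min_le_left (δ / 2) 1]

theorem Complex.lt_re_of_lt_norm_one_add {w : ℂ} {t : ℝ} (hw : ‖w‖ ≤ 1)
    (h : 2 - t < ‖1 + w‖) : 1 - 2 * t < w.re := by
  have hw2 : w.re ^ 2 + w.im ^ 2 ≤ 1 := by
    have := Complex.sq_norm w
    rw [Complex.normSq_apply] at this
    nlinarith [norm_nonneg w]
  have h1w : ‖1 + w‖ ^ 2 = (1 + w.re) ^ 2 + w.im ^ 2 := by
    rw [Complex.sq_norm, Complex.normSq_apply]
    simp only [Complex.add_re, Complex.one_re, Complex.add_im, Complex.one_im]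
    ring
  rcases le_or_gt (2 - t) 0 with ht | ht
  · nlinarith
  · have := pow_lt_pow_left₀ h ht.le two_ne_zero
    nlinarith [sq_nonneg t]

theorem norm_add_re_le_of_isMaxOn {α : Type*} {f : α → Y} {φ : α → ℂ} {v : Y} {s : Set α}
    {x₀ z : α} (hv : ‖v‖ = 1) (hfx₀ : f x₀ = (‖f x₀‖ : ℂ) • v) (hx₀ : x₀ ∈ s)
    (hz : IsMaxOn (fun y => ‖f y + φ y • v‖) s z) : ‖f x₀‖ + (φ x₀).re ≤ ‖f z + φ z • v‖ :=
  calc ‖f x₀‖ + (φ x₀).re = ((‖f x₀‖ : ℂ) + φ x₀).re := by simp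
    _ ≤ ‖(‖f x₀‖ : ℂ) + φ x₀‖ := Complex.re_le_norm _
    _ = ‖(‖f x₀‖ : ℂ) • v + φ x₀ • v‖ := by rw [← add_smul, norm_smul, hv, mul_one]
    _ = ‖f x₀ + φ x₀ • v‖ := by rw [← hfx₀]
    _ ≤ ‖f z + φ z • v‖ := hz hx₀

theorem abs_norm_sub_norm_le_of_isMaxOn {α E : Type*} [SeminormedAddCommGroup E] {f g : α → E}
    {s : Set α} {a b : α} {c : ℝ} (ha : a ∈ s) (hb : b ∈ s)
    (hfa : IsMaxOn (fun y => ‖f y‖) s a) (hgb : IsMaxOn (fun y => ‖g y‖) s b)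
    (hfg : ∀ y ∈ s, ‖g y - f y‖ ≤ c) : |‖g b‖ - ‖f a‖| ≤ c := by
  have hga : ‖g a‖ ≤ ‖g b‖ := hgb ha
  have hfb : ‖f b‖ ≤ ‖f a‖ := hfa hb
  rw [abs_le]
  constructor
  · linarith [norm_sub_norm_le (f a) (g a), norm_sub_rev (f a) (g a), hfg a ha]
  · linarith [norm_sub_norm_le (g b) (f b), hfg b hb]

theorem norm_inv_smul_sub_self_le {M : ℝ} (hM : 0 < M) {w : Y} (hw : ‖w‖ ≤ M) :
    ‖(M : ℂ)⁻¹ • w - w‖ ≤ |1 - M| :=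
  calc ‖(M : ℂ)⁻¹ • w - w‖ = ‖((M⁻¹ - 1 : ℝ) : ℂ) • w‖ := by push_cast; rw [sub_smul, one_smul]
    _ = |M⁻¹ - 1| * ‖w‖ := by rw [norm_smul, Complex.norm_real, Real.norm_eq_abs]
    _ ≤ |M⁻¹ - 1| * M := mul_le_mul_of_nonneg_left hw (abs_nonneg _)
    _ = |(M⁻¹ - 1) * M| := by rw [abs_mul, abs_of_pos hM]
    _ = |1 - M| := by rw [sub_mul, inv_mul_cancel₀ hM.ne', one_mul]

theorem supNorm_le {E : Type*} [NormedAddCommGroup E] {f : StrongDual ℂ X → E} {C : ℝ}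
    (h : ∀ y ∈ closedBall (0 : StrongDual ℂ X) 1, ‖f y‖ ≤ C) : supNorm f ≤ C :=
  have : Nonempty (closedBall (0 : StrongDual ℂ X) 1) := ⟨⟨0, mem_closedBall_self zero_le_one⟩⟩
  ciSup_le fun y => h y y.2

theorem supNorm_eq_of_isMaxOn {E : Type*} [NormedAddCommGroup E] {f : StrongDual ℂ X → E}
    {z : StrongDual ℂ X} (hz : z ∈ closedBall (0 : StrongDual ℂ X) 1)
    (hmax : IsMaxOn (fun y => ‖f y‖) (closedBall 0 1) z) : supNorm f = ‖f z‖ :=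
  le_antisymm (supNorm_le fun _ hy => hmax hy)
    (le_ciSup ⟨‖f z‖, Set.forall_mem_range.2 fun y => hmax y.2⟩
      (⟨z, hz⟩ : closedBall (0 : StrongDual ℂ X) 1))

theorem supNorm_inv_norm_smul_of_isMaxOn {G : StrongDual ℂ X → Y} {x₁ : StrongDual ℂ X}
    (hx₁ : x₁ ∈ closedBall (0 : StrongDual ℂ X) 1)
    (hmax : IsMaxOn (fun y => ‖G y‖) (closedBall 0 1) x₁) (hG : G x₁ ≠ 0) :
    supNorm (fun y => (‖G x₁‖⁻¹ : ℂ) • G y) = 1 := by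
  refine (supNorm_eq_of_isMaxOn hx₁ (isMaxOn_iff.2 fun y hy => ?_)).trans (norm_smul_inv_norm hG)
  rw [norm_smul, norm_smul]
  exact mul_le_mul_of_nonneg_left (hmax hy) (norm_nonneg _)

theorem supNorm_inv_norm_smul_sub_le {f G : StrongDual ℂ X → Y} {x₁ : StrongDual ℂ X} {c : ℝ}
    (hmax : IsMaxOn (fun y => ‖G y‖) (closedBall 0 1) x₁) (hG : G x₁ ≠ 0)
    (hGf : ∀ y ∈ closedBall (0 : StrongDual ℂ X) 1, ‖G y - f y‖ ≤ c) :
    supNorm (fun y => (‖G x₁‖⁻¹ : ℂ) • G y - f y) ≤ |1 - ‖G x₁‖| + c :=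
  supNorm_le fun y hy => (norm_sub_le_norm_sub_add_norm_sub _ (G y) _).trans
    (add_le_add (norm_inv_smul_sub_self_le (norm_pos_iff.2 hG) (hmax hy)) (hGf y hy))

theorem MemAwsu.exists_isMaxOn {f : StrongDual ℂ X → Y} (hf : MemAwsu f) :
    ∃ z ∈ closedBall (0 : StrongDual ℂ X) 1, IsMaxOn (fun y => ‖f y‖) (closedBall 0 1) z := by
  have hK : IsCompact {φ : WeakDual ℂ X | ‖WeakDual.toStrongDual φ‖ ≤ 1} := by
    simpa [Set.preimage, mem_closedBall_zero_iff] using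
      WeakDual.isCompact_closedBall (𝕜 := ℂ) (E := X) 0 1
  obtain ⟨φ, hφ, hmax⟩ := hK.exists_isMaxOn ⟨0, by simp⟩ hf.1.norm
  exact ⟨WeakDual.toStrongDual φ, mem_closedBall_zero_iff.2 hφ,
    fun y hy => hmax (show StrongDual.toWeakDual y ∈ _ by simpa using hy)⟩

theorem MemAwsu.continuousOn_closedBall {f : StrongDual ℂ X → Y} (hf : MemAwsu f) :
    ContinuousOn f (closedBall (0 : StrongDual ℂ X) 1) :=
  hf.1.comp (f := fun y : StrongDual ℂ X => StrongDual.toWeakDual y)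
    NormedSpace.Dual.toWeakDual_continuous.continuousOn
    fun y hy => by simpa using mem_closedBall_zero_iff.1 hy

theorem MemAwsu.add {f g : StrongDual ℂ X → Y} (hf : MemAwsu f) (hg : MemAwsu g) :
    MemAwsu fun y => f y + g y :=
  ⟨hf.1.add hg.1, hf.2.add hg.2⟩

theorem MemAwsu.const_smul {f : StrongDual ℂ X → Y} (hf : MemAwsu f) (c : ℂ) :
    MemAwsu fun y => c • f y :=
  ⟨hf.1.const_smul c, hf.2.const_smul c⟩

theorem MemAwsu.smul_const {φ : StrongDual ℂ X → ℂ} (hφ : MemAwsu φ) (v : Y) :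
    MemAwsu fun y => φ y • v :=
  ⟨hφ.1.smul continuousOn_const, hφ.2.smul_const v⟩

theorem memAwsu_const (c : Y) : MemAwsu fun _ : StrongDual ℂ X => c :=
  ⟨continuousOn_const, differentiableOn_const c⟩

theorem memAwsu_apply (x : X) : MemAwsu fun y : StrongDual ℂ X => y x :=
  ⟨(WeakDual.eval_continuous x).continuousOn,
    (ContinuousLinearMap.apply ℂ ℂ x).differentiable.differentiableOn⟩

theorem MemAwsu.norm_eqOn_of_isMaxOn {G : StrongDual ℂ X → Y} (hG : MemAwsu G)
    {z : StrongDual ℂ X} (hz : ‖z‖ < 1) (hmax : IsMaxOn (fun y => ‖G y‖) (closedBall 0 1) z) :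
    Set.EqOn (fun y => ‖G y‖) (fun _ => ‖G z‖) (closedBall 0 1) := by
  have hcl := closure_ball (0 : StrongDual ℂ X) one_ne_zero
  have hd : DiffContOnCl ℂ G (ball 0 1) := ⟨hG.2, hcl ▸ hG.continuousOn_closedBall⟩
  have h := Complex.norm_eqOn_closure_of_isPreconnected_of_isMaxOn
    (convex_ball 0 1).isPreconnected isOpen_ball hd (mem_ball_zero_iff.2 hz)
    (hmax.on_subset ball_subset_closedBall)
  rwa [hcl] at h

theorem MemAwsu.exists_norm_eq_one_isMaxOn {G : StrongDual ℂ X → Y} (hG : MemAwsu G)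
    {x₀ z : StrongDual ℂ X} (hx₀ : ‖x₀‖ = 1) (hz : z ∈ closedBall (0 : StrongDual ℂ X) 1)
    (hmax : IsMaxOn (fun y => ‖G y‖) (closedBall 0 1) z) :
    ∃ x₁ : StrongDual ℂ X, ‖x₁‖ = 1 ∧ IsMaxOn (fun y => ‖G y‖) (closedBall 0 1) x₁ ∧
      ‖x₁ - x₀‖ ≤ ‖z - x₀‖ := by
  rcases (mem_closedBall_zero_iff.1 hz).eq_or_lt with hz1 | hz1
  · exact ⟨z, hz1, hmax, le_rfl⟩
  · have hconst := hG.norm_eqOn_of_isMaxOn hz1 hmax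
    refine ⟨x₀, hx₀, isMaxOn_iff.2 fun y hy => ?_, by simp⟩
    exact (hconst hy).trans (hconst (mem_closedBall_zero_iff.2 hx₀.le)).symm |>.le

def peakPerturbation (f : StrongDual ℂ X → Y) (a : ℝ) (x : X) (v : Y) : StrongDual ℂ X → Y :=
  fun y => f y + ((a : ℂ) * (1 + y x)) • v

theorem MemAwsu.peakPerturbation {f : StrongDual ℂ X → Y} (hf : MemAwsu f) (a : ℝ) (x : X)
    (v : Y) : MemAwsu (peakPerturbation f a x v) :=
  hf.add ((((memAwsu_const 1).add (memAwsu_apply x)).const_smul (a : ℂ)).smul_const v)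

theorem norm_peakPerturbation_sub_le {f : StrongDual ℂ X → Y} {a : ℝ} {x : X} {v : Y}
    {y : StrongDual ℂ X} (ha : 0 ≤ a) (hx : ‖x‖ ≤ 1) (hv : ‖v‖ = 1)
    (hy : y ∈ closedBall (0 : StrongDual ℂ X) 1) : ‖peakPerturbation f a x v y - f y‖ ≤ 2 * a := by
  rw [peakPerturbation, add_sub_cancel_left, norm_smul, hv, mul_one, norm_mul, Complex.norm_real,
    Real.norm_of_nonneg ha]
  have hyx : ‖y x‖ ≤ 1 * 1 := y.le_of_opNorm_le_of_le (mem_closedBall_zero_iff.1 hy) hx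
  have h1yx : ‖1 + y x‖ ≤ 2 := (norm_add_le _ _).trans (by rw [norm_one]; linarith)
  nlinarith

theorem lt_re_apply_of_isMaxOn_peakPerturbation {f : StrongDual ℂ X → Y} {a t : ℝ} {x : X}
    {v : Y} {x₀ z : StrongDual ℂ X} (hf : ∀ y ∈ closedBall (0 : StrongDual ℂ X) 1, ‖f y‖ ≤ 1)
    (ha : 0 < a) (hx : ‖x‖ ≤ 1) (hv : ‖v‖ = 1) (hfx₀v : f x₀ = (‖f x₀‖ : ℂ) • v)
    (hx₀ : x₀ ∈ closedBall (0 : StrongDual ℂ X) 1) (hz : z ∈ closedBall (0 : StrongDual ℂ X) 1)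
    (hmax : IsMaxOn (fun y => ‖peakPerturbation f a x v y‖) (closedBall 0 1) z)
    (hx₀x : 1 - t < (x₀ x).re) (hfx₀ : 1 - a * t < ‖f x₀‖) : 1 - 4 * t < (z x).re := by
  unfold peakPerturbation at hmax
  have hlow := norm_add_re_le_of_isMaxOn (φ := fun y : StrongDual ℂ X => (a : ℂ) * (1 + y x))
    hv hfx₀v hx₀ hmax
  have hup : ‖f z + ((a : ℂ) * (1 + z x)) • v‖ ≤ 1 + a * ‖1 + z x‖ := by
    refine (norm_add_le _ _).trans (add_le_add (hf z hz) ?_)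
    rw [norm_smul, hv, mul_one, norm_mul, Complex.norm_real, Real.norm_of_nonneg ha.le]
  simp only [Complex.re_ofReal_mul, Complex.add_re, Complex.one_re] at hlow
  have hpeak : a * (2 - 2 * t) < a * ‖1 + z x‖ := by nlinarith
  have hzx : ‖z x‖ ≤ 1 := (z.le_of_opNorm_le_of_le (mem_closedBall_zero_iff.1 hz) hx).trans_eq
    (mul_one 1)
  linarith [Complex.lt_re_of_lt_norm_one_add hzx (lt_of_mul_lt_mul_left hpeak ha.le)]

theorem bpb_Awsu_uniformly_convex_dual_general (X Y : Type*)
    [NormedAddCommGroup X] [NormedSpace ℂ X]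
    [UniformConvexSpace (StrongDual ℂ X)]
    [NormedAddCommGroup Y] [NormedSpace ℂ Y] :
    ∀ ε ∈ Set.Ioo (0 : ℝ) 1, ∃ η > 0,
      ∀ f : StrongDual ℂ X → Y, MemAwsu f → supNorm f = 1 →
        ∀ x₀ : StrongDual ℂ X, ‖x₀‖ = 1 → 1 - η < ‖f x₀‖ →
          ∃ g : StrongDual ℂ X → Y, ∃ x₁ : StrongDual ℂ X, MemAwsu g ∧ supNorm g = 1 ∧ ‖x₁‖ = 1 ∧
            ‖g x₁‖ = 1 ∧ supNorm (fun y => g y - f y) < ε ∧ ‖x₁ - x₀‖ < ε := by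
  rintro ε ⟨hε0, hε1⟩
  obtain ⟨δ, ⟨hδ0, hδ1⟩, hconvex⟩ :=
    exists_forall_norm_sub_lt_of_lt_re_apply (𝕜 := ℂ) (E := X) hε0
  -- `a = ε / 8` and `t = δ / 4` in `lt_re_apply_of_isMaxOn_peakPerturbation`
  refine ⟨ε / 8 * (δ / 4), by positivity, fun f hf hf1 x₀ hx₀ hfx₀ => ?_⟩
  obtain ⟨w, hw, hwmax⟩ := hf.exists_isMaxOn
  have hfw : ‖f w‖ = 1 := (supNorm_eq_of_isMaxOn hw hwmax).symm.trans hf1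
  have hfB : ∀ y ∈ closedBall (0 : StrongDual ℂ X) 1, ‖f y‖ ≤ 1 := fun y hy => hfw ▸ hwmax hy
  obtain ⟨x, hx, hx₀x⟩ := x₀.exists_norm_le_one_lt_re_apply (r := 1 - δ / 4) (by linarith)
  simp only [RCLike.re_to_complex] at hconvex hx₀x
  obtain ⟨v, hv, hfx₀v⟩ := exists_norm_eq_one_eq_norm_smul (𝕜 := ℂ) (y := f x₀)
    (norm_pos_iff.1 (by nlinarith))
  set G := peakPerturbation f (ε / 8) x v
  have hG : MemAwsu G := hf.peakPerturbation _ x v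
  have hGf : ∀ y ∈ closedBall (0 : StrongDual ℂ X) 1, ‖G y - f y‖ ≤ 2 * (ε / 8) :=
    fun y hy => norm_peakPerturbation_sub_le (by positivity) hx hv hy
  obtain ⟨z, hz, hzmax⟩ := hG.exists_isMaxOn
  have hzx := lt_re_apply_of_isMaxOn_peakPerturbation hfB (by positivity) hx hv hfx₀v
    (mem_closedBall_zero_iff.2 hx₀.le) hz hzmax hx₀x hfx₀
  have hzx₀ : ‖z - x₀‖ < ε :=
    hconvex x hx (mem_closedBall_zero_iff.1 hz) hx₀.le (by linarith) (by linarith)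
  obtain ⟨x₁, hx₁, hx₁max, hx₁x₀⟩ := hG.exists_norm_eq_one_isMaxOn hx₀ hz hzmax
  have hM : |1 - ‖G x₁‖| ≤ 2 * (ε / 8) := by
    simpa [hfw, abs_sub_comm] using abs_norm_sub_norm_le_of_isMaxOn hw
      (mem_closedBall_zero_iff.2 hx₁.le) hwmax hx₁max hGf
  have hGx₁ : G x₁ ≠ 0 := norm_pos_iff.1 (by linarith [abs_le.1 hM])
  refine ⟨fun y => (‖G x₁‖⁻¹ : ℂ) • G y, x₁, hG.const_smul _,
    supNorm_inv_norm_smul_of_isMaxOn (mem_closedBall_zero_iff.2 hx₁.le) hx₁max hGx₁, hx₁,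
    norm_smul_inv_norm hGx₁, ?_, hx₁x₀.trans_lt hzx₀⟩
  exact (supNorm_inv_norm_smul_sub_le hx₁max hGx₁ hGf).trans_lt (by linarith)

/-- Vector-valued Bishop-Phelps-Bollobás theorem for `A_{w*u}(B_{X*}, Y)` when the dual
`X*` is uniformly convex. -/
theorem bpb_Awsu_uniformly_convex_dual (X Y : Type*)
    [NormedAddCommGroup X] [NormedSpace ℂ X] [CompleteSpace X]
    [UniformConvexSpace (StrongDual ℂ X)]
    [NormedAddCommGroup Y] [NormedSpace ℂ Y] [CompleteSpace Y] :
    ∀ ε ∈ Set.Ioo (0 : ℝ) 1, ∃ η > 0,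
      ∀ f : StrongDual ℂ X → Y, MemAwsu f → supNorm f = 1 →
        ∀ x₀ : StrongDual ℂ X, ‖x₀‖ = 1 → 1 - η < ‖f x₀‖ →
          ∃ g : StrongDual ℂ X → Y, ∃ x₁ : StrongDual ℂ X, MemAwsu g ∧ supNorm g = 1 ∧ ‖x₁‖ = 1 ∧
            ‖g x₁‖ = 1 ∧ supNorm (fun y => g y - f y) < ε ∧ ‖x₁ - x₀‖ < ε :=
  bpb_Awsu_uniformly_convex_dual_general X Y
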